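/- Let Ω ⊆ ℂⁿ be a bounded domain and let φ be a plurisubharmonic function on Ω. If φ ∈ VMO(Ω), then the Lelong number ν_φ(a) = 0 for every a ∈ Ω. -/

import Mathlib

open MeasureTheory Metric Filter Topology
open scoped ENNReal NNReal

noncomputable section

variable {n : ℕ}

/-- `ℂⁿ` with the Euclidean norm. -/
abbrev Cn (n : ℕ) : Type := EuclideanSpace ℂ (Fin n)

noncomputable instance : MeasurableSpace (Cn n) := borel _
instance : BorelSpace (Cn n) := ⟨rfl⟩
noncomputable instance : InnerProductSpace ℝ (Cn n) := InnerProductSpace.complexToReal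

/-- The canonical map `EReal → ℝ≥0∞` sending negative values to `0` and `⊤` to `⊤`. -/
def erealToENNReal (x : EReal) : ℝ≥0∞ := if x = ⊤ then ⊤ else ENNReal.ofReal x.toReal

/-- `φ : U → [-∞, ∞)` is plurisubharmonic on the open set `U ⊆ ℂⁿ`: it is upper
semicontinuous on `U`, not identically `-∞` on any connected component of `U`, and for every
`a ∈ U`, `b ∈ ℂⁿ` and `r > 0` with `{a + λ • b : |λ| ≤ r} ⊆ U` one has
`φ a ≤ (1 / 2π) ∫_0^{2π} φ (a + r e^{iθ} • b) dθ`.  The sub-mean value inequality for the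
`EReal`-valued `φ` is encoded, for every real upper bound `M` of `φ` on the circle, as
`∫_0^{2π} (M - φ(a + r e^{iθ} b)) dθ ≤ 2π (M - φ a)` in `ℝ≥0∞`, which is equivalent to it. -/
def IsPSHOn (φ : Cn n → EReal) (U : Set (Cn n)) : Prop :=
  UpperSemicontinuousOn φ U ∧
  (∀ x ∈ U, ∃ z ∈ connectedComponentIn U x, φ z ≠ ⊥) ∧
  ∀ a ∈ U, ∀ b : Cn n, ∀ r : ℝ, 0 < r →
    (∀ lam : ℂ, ‖lam‖ ≤ r → a + lam • b ∈ U) →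
    ∀ M : ℝ,
      (∀ θ : ℝ, φ (a + ((r : ℂ) * Complex.exp ((θ : ℂ) * Complex.I)) • b) ≤ (M : EReal)) →
      ∫⁻ θ in Set.Ioc (0 : ℝ) (2 * Real.pi),
          erealToENNReal ((M : EReal) - φ (a + ((r : ℂ) * Complex.exp ((θ : ℂ) * Complex.I)) • b))
        ≤ ENNReal.ofReal (2 * Real.pi) * erealToENNReal ((M : EReal) - φ a)

/-- The mean value `φ_{B(z,r)}` of `φ` over the ball `B(z,r)`, w.r.t. Lebesgue measure. -/
def ballAvg (φ : Cn n → EReal) (z : Cn n) (r : ℝ) : ℝ :=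
  ⨍ x in ball z r, (φ x).toReal

/-- The mean oscillation `MO_{B(z,r)}(φ)` of `φ` over the ball `B(z,r)`. -/
def MO (φ : Cn n → EReal) (z : Cn n) (r : ℝ) : ℝ :=
  ⨍ x in ball z r, |(φ x).toReal - ballAvg φ z r|

/-- The set of mean oscillations of `φ` over admissible balls `B(z,r)`, `z ∈ Ω`,
`0 < r ≤ (1/2) · dist(z, ∂Ω)`. -/
def moSet (φ : Cn n → EReal) (Ω : Set (Cn n)) : Set ℝ :=
  {m | ∃ z ∈ Ω, ∃ r : ℝ, 0 < r ∧ r ≤ (1 / 2) * infDist z (frontier Ω) ∧ m = MO φ z r}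

/-- The BMO norm `‖φ‖_{BMO(Ω)}`: the supremum of mean oscillations over all balls `B(z,r)`
with `z ∈ Ω` and `0 < r ≤ (1/2) · dist(z, ∂Ω)`. -/
def bmoNorm (φ : Cn n → EReal) (Ω : Set (Cn n)) : ℝ := sSup (moSet φ Ω)

/-- `φ` is BMO on `Ω`: its BMO norm is finite. -/
def IsBMOOn (φ : Cn n → EReal) (Ω : Set (Cn n)) : Prop := BddAbove (moSet φ Ω)

/-- `φ` is VMO on `Ω`: `φ` is BMO on `Ω` and for every `ε > 0` there is `δ > 0` such that
`MO_{B(z,r)}(φ) < ε` for all `z ∈ Ω` and all `0 < r ≤ min δ ((1/2) · dist(z, ∂Ω))`. -/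
def IsVMOOn (φ : Cn n → EReal) (Ω : Set (Cn n)) : Prop :=
  IsBMOOn φ Ω ∧
  ∀ ε : ℝ, 0 < ε → ∃ δ : ℝ, 0 < δ ∧ ∀ z ∈ Ω, ∀ r : ℝ, 0 < r →
    r ≤ min δ ((1 / 2) * infDist z (frontier Ω)) → MO φ z r < ε

/-- The Lelong number `ν_φ(a) = lim_{r → 0⁺} (sup_{B(a,r)} φ) / log r`. -/
def lelong (φ : Cn n → EReal) (a : Cn n) : ℝ :=
  limUnder (𝓝[>] (0 : ℝ)) fun r : ℝ => (⨆ z ∈ ball a r, φ z).toReal / Real.log r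

/-!
Small mean oscillation makes the ball averages `φ_{B(a,r)}` vary slowly: shrinking the radius by
a factor at most `2` changes the average by at most `2^{2n} MO_{B(a,r)}(φ)`. If the mean
oscillation is below `η` at all small scales, chaining dyadic steps gives
`φ_{B(a,r)} ≥ C + ε log r` with `ε` proportional to `η`. The sub-mean value property of `φ`,
averaged over rotations, makes `φ` integrable on small balls around `a`, and then
`φ_{B(a,r)} ≤ sup_{B(a,r)} φ`. Dividing by `log r < 0` gives
`sup_{B(a,r)} φ / log r ≤ C / log r + ε`, while an upper bound `sup_{B(a,r)} φ ≤ M` gives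
`sup_{B(a,r)} φ / log r ≥ M / log r`. Both outer terms tend to `0` up to `ε`, and `ε` is arbitrary.
-/

open Set

theorem measurable_erealToENNReal_sub (M : ℝ) :
    Measurable fun e : EReal => erealToENNReal ((M : EReal) - e) :=
  EReal.continuous_toENNReal.measurable.comp (by fun_prop)

theorem sub_toReal_erealToENNReal_sub {M : ℝ} {e : EReal} (he : e ≠ ⊥) (heM : e ≤ M) :
    M - (erealToENNReal ((M : EReal) - e)).toReal = e.toReal := by
  induction e using EReal.rec with
  | bot => exact absurd rfl he
  | top => exact absurd heM (by simp)
  | coe x =>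
    simp only [← EReal.coe_sub, erealToENNReal, EReal.coe_ne_top, if_false, EReal.toReal_coe]
    rw [ENNReal.toReal_ofReal (sub_nonneg.2 (EReal.coe_le_coe_iff.1 heM)), sub_sub_cancel]

theorem EReal.coe_sub_ne_top {x : ℝ} {e : EReal} (he : e ≠ ⊥) : (x : EReal) - e ≠ ⊤ := by
  induction e using EReal.rec <;> simp_all [← EReal.coe_sub]

theorem IsOpen.upperSemicontinuous_piecewise_top {α β : Type*} [TopologicalSpace α] [Preorder β]
    [OrderTop β] {U : Set α} [DecidablePred (· ∈ U)] {f : α → β} (hU : IsOpen U)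
    (hf : UpperSemicontinuousOn f U) : UpperSemicontinuous (U.piecewise f fun _ => ⊤) := by
  intro x y hy
  by_cases hx : x ∈ U
  · rw [piecewise_eq_of_mem _ _ _ hx] at hy
    have hfx := hf x hx y hy
    rw [nhdsWithin_eq_nhds.2 (hU.mem_nhds hx)] at hfx
    filter_upwards [hfx, hU.mem_nhds hx] with z hz hzU
    rwa [piecewise_eq_of_mem _ _ _ hzU]
  · rw [piecewise_eq_of_notMem _ _ _ hx] at hy
    exact absurd hy not_top_lt

theorem measurePreserving_exp_mul_I_smul (θ : ℝ) :
    MeasurePreserving (fun x : Cn n => Complex.exp (θ * Complex.I) • x) :=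
  LinearIsometryEquiv.measurePreserving
    { toLinearEquiv :=
        (LinearEquiv.smulOfNeZero ℂ (Cn n) _ (Complex.exp_ne_zero _)).restrictScalars ℝ
      norm_map' := fun x => by simp [norm_smul, Complex.norm_exp_ofReal_mul_I] }

theorem setLIntegral_ball_zero_exp_mul_I_smul (g : Cn n → ℝ≥0∞) (ρ θ : ℝ) :
    ∫⁻ x in ball 0 ρ, g (Complex.exp (θ * Complex.I) • x) = ∫⁻ x in ball 0 ρ, g x := by
  have hpre : (fun x : Cn n => Complex.exp (θ * Complex.I) • x) ⁻¹' ball 0 ρ = ball 0 ρ := by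
    ext x
    simp [norm_smul, Complex.norm_exp_ofReal_mul_I]
  simpa only [hpre] using (measurePreserving_exp_mul_I_smul θ).setLIntegral_comp_preimage_emb
    (Homeomorph.smulOfNeZero _ (Complex.exp_ne_zero _)).measurableEmbedding g (ball 0 ρ)

theorem setLIntegral_ball_eq_ball_zero (g : Cn n → ℝ≥0∞) (z : Cn n) (ρ : ℝ) :
    ∫⁻ x in ball z ρ, g x = ∫⁻ x in ball 0 ρ, g (z + x) := by
  rw [← (measurePreserving_add_left volume z).setLIntegral_comp_preimage_emb
    (Homeomorph.addLeft z).measurableEmbedding, preimage_add_ball, sub_self]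

def HasSubMeanValueOn (φ : Cn n → EReal) (U : Set (Cn n)) : Prop :=
  ∀ a ∈ U, ∀ b : Cn n, ∀ r : ℝ, 0 < r →
    (∀ lam : ℂ, ‖lam‖ ≤ r → a + lam • b ∈ U) →
    ∀ M : ℝ,
      (∀ θ : ℝ, φ (a + ((r : ℂ) * Complex.exp ((θ : ℂ) * Complex.I)) • b) ≤ (M : EReal)) →
      ∫⁻ θ in Set.Ioc (0 : ℝ) (2 * Real.pi),
          erealToENNReal ((M : EReal) - φ (a + ((r : ℂ) * Complex.exp ((θ : ℂ) * Complex.I)) • b))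
        ≤ ENNReal.ofReal (2 * Real.pi) * erealToENNReal ((M : EReal) - φ a)

theorem IsPSHOn.hasSubMeanValueOn {U : Set (Cn n)} {φ : Cn n → EReal} (hφ : IsPSHOn φ U) :
    HasSubMeanValueOn φ U :=
  hφ.2.2

namespace HasSubMeanValueOn

variable {U : Set (Cn n)} {φ ψ : Cn n → EReal}

theorem congr (hφ : HasSubMeanValueOn φ U) (hψ : EqOn ψ φ U) : HasSubMeanValueOn ψ U := by
  intro a ha b r hr hdisc M hM
  have hcircle : ∀ θ : ℝ, a + ((r : ℂ) * Complex.exp ((θ : ℂ) * Complex.I)) • b ∈ U := fun θ =>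
    hdisc _ (by simp [Complex.norm_exp_ofReal_mul_I, abs_of_pos hr])
  simp only [hψ (hcircle _), hψ ha] at hM ⊢
  exact hφ a ha b r hr hdisc M hM

/-- Average the circle inequality over the directions `e^{iθ} x`, `x ∈ B(0, ρ)`, using the
rotation invariance of Lebesgue measure. -/
theorem lintegral_ball_le (hφ : HasSubMeanValueOn φ U) (hmeas : Measurable φ) {z : Cn n}
    {ρ M : ℝ} (hρ : 0 < ρ) (hball : ball z ρ ⊆ U) (hM : ∀ x ∈ ball z ρ, φ x ≤ M) :
    ∫⁻ x in ball z ρ, erealToENNReal (M - φ x) ≤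
      volume (ball z ρ) * erealToENNReal (M - φ z) := by
  set F : Cn n → ℝ≥0∞ := fun x => erealToENNReal (M - φ (z + x))
  have hF : Measurable F :=
    (measurable_erealToENNReal_sub M).comp (hmeas.comp (measurable_const_add z))
  have hcircle : ∀ x ∈ ball (0 : Cn n) ρ,
      ∫⁻ θ in Ioc 0 (2 * Real.pi), F (Complex.exp (θ * Complex.I) • x) ≤
        ENNReal.ofReal (2 * Real.pi) * erealToENNReal (M - φ z) := by
    intro x hx
    have hdisc : ∀ lam : ℂ, ‖lam‖ ≤ 1 → z + lam • x ∈ ball z ρ := fun lam hlam => by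
      rw [mem_ball_zero_iff] at hx
      rw [mem_ball, dist_self_add_left, norm_smul]
      nlinarith [norm_nonneg lam, norm_nonneg x]
    simpa using hφ z (hball (mem_ball_self hρ)) x 1 one_pos (fun lam hlam => hball (hdisc lam hlam))
      M (fun θ => hM _ (hdisc _ (by simp [Complex.norm_exp_ofReal_mul_I])))
  have h2π : ENNReal.ofReal (2 * Real.pi) ≠ 0 := by positivity
  rw [setLIntegral_ball_eq_ball_zero, ← ENNReal.mul_le_mul_iff_right h2π ENNReal.ofReal_ne_top]
  calc ENNReal.ofReal (2 * Real.pi) * ∫⁻ x in ball 0 ρ, F x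
      = ∫⁻ θ in Ioc 0 (2 * Real.pi), ∫⁻ x in ball 0 ρ, F (Complex.exp (θ * Complex.I) • x) := by
        simp only [setLIntegral_ball_zero_exp_mul_I_smul F, setLIntegral_const, Real.volume_Ioc,
          sub_zero]
        rw [mul_comm]
    _ = ∫⁻ x in ball 0 ρ, ∫⁻ θ in Ioc 0 (2 * Real.pi), F (Complex.exp (θ * Complex.I) • x) :=
        lintegral_lintegral_swap (hF.comp (by fun_prop)).aemeasurable
    _ ≤ ∫⁻ _ in ball 0 ρ, ENNReal.ofReal (2 * Real.pi) * erealToENNReal (M - φ z) :=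
        setLIntegral_mono measurable_const hcircle
    _ = ENNReal.ofReal (2 * Real.pi) * (volume (ball z ρ) * erealToENNReal (M - φ z)) := by
        rw [setLIntegral_const, Measure.addHaar_ball_center volume z, mul_assoc,
          mul_comm (volume _)]

theorem integrableOn_ball (hφ : HasSubMeanValueOn φ U) (hmeas : Measurable φ) {z : Cn n}
    {ρ M : ℝ} (hρ : 0 < ρ) (hball : ball z ρ ⊆ U) (hM : ∀ x ∈ ball z ρ, φ x ≤ M)
    (hz : φ z ≠ ⊥) :
    IntegrableOn (fun x => (φ x).toReal) (ball z ρ) ∧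
      ∀ᵐ x ∂volume.restrict (ball z ρ), φ x ≠ ⊥ := by
  have hFmeas := (measurable_erealToENNReal_sub M).comp hmeas
  have hMz : erealToENNReal (M - φ z) ≠ ⊤ := by
    simp [erealToENNReal, EReal.coe_sub_ne_top hz]
  have hfin : ∫⁻ x in ball z ρ, erealToENNReal (M - φ x) ≠ ⊤ :=
    ((hφ.lintegral_ball_le hmeas hρ hball hM).trans_lt
      (ENNReal.mul_lt_top measure_ball_lt_top hMz.lt_top)).ne
  have hae : ∀ᵐ x ∂volume.restrict (ball z ρ), φ x ≠ ⊥ := by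
    filter_upwards [ae_lt_top hFmeas hfin] with x hx hbot
    simp [hbot, erealToENNReal] at hx
  refine ⟨?_, hae⟩
  refine ((integrableOn_const (C := M) measure_ball_lt_top.ne).sub
    (integrable_toReal_of_lintegral_ne_top hFmeas.aemeasurable hfin)).congr ?_
  filter_upwards [hae, ae_restrict_mem measurableSet_ball] with x hxbot hx
  exact sub_toReal_erealToENNReal_sub hxbot (hM x hx)

end HasSubMeanValueOn

theorem IsPSHOn.integrableOn_ball {U : Set (Cn n)} {φ : Cn n → EReal} (hφ : IsPSHOn φ U)
    (hU : IsOpen U) {z : Cn n} {ρ M : ℝ} (hρ : 0 < ρ) (hball : ball z ρ ⊆ U)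
    (hM : ∀ x ∈ ball z ρ, φ x ≤ M) (hz : φ z ≠ ⊥) :
    IntegrableOn (fun x => (φ x).toReal) (ball z ρ) ∧
      ∀ᵐ x ∂volume.restrict (ball z ρ), φ x ≠ ⊥ := by
  classical
  have hψ : EqOn (U.piecewise φ fun _ => ⊤) φ (ball z ρ) := (piecewise_eqOn U φ _).mono hball
  obtain ⟨hint, hae⟩ := (hφ.hasSubMeanValueOn.congr (piecewise_eqOn U φ _)).integrableOn_ball
    (hU.upperSemicontinuous_piecewise_top hφ.1).measurable hρ hball
    (fun x hx => (hψ hx).trans_le (hM x hx)) ((hψ (mem_ball_self hρ)).trans_ne hz)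
  refine ⟨hint.congr_fun (fun x hx => congrArg EReal.toReal (hψ hx)) measurableSet_ball, ?_⟩
  filter_upwards [hae, ae_restrict_mem measurableSet_ball] with x hx hxz
  rwa [← hψ hxz]

theorem abs_setAverage_sub_setAverage_le {α : Type*} [MeasurableSpace α] {μ : Measure α}
    {s t : Set α} {f : α → ℝ} (hst : s ⊆ t) (hs : μ s ≠ 0) (ht : μ t ≠ ∞)
    (hf : IntegrableOn f t μ) :
    |⨍ x in s, f x ∂μ - ⨍ x in t, f x ∂μ| ≤
      μ.real t / μ.real s * ⨍ x in t, |f x - ⨍ y in t, f y ∂μ| ∂μ := by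
  set c := ⨍ y in t, f y ∂μ
  have hs' : μ s ≠ ∞ := ne_top_of_le_ne_top ht (measure_mono hst)
  have hspos : 0 < μ.real s := ENNReal.toReal_pos hs hs'
  have htpos : 0 < μ.real t := ENNReal.toReal_pos (fun h => hs (measure_mono_null hst h)) ht
  have hdiff : ⨍ x in s, f x ∂μ - c = (μ.real s)⁻¹ * ∫ x in s, (f x - c) ∂μ := by
    rw [integral_sub (hf.mono_set hst) (integrableOn_const hs'), setIntegral_const, setAverage_eq,
      smul_eq_mul, smul_eq_mul, mul_sub, inv_mul_cancel_left₀ hspos.ne']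
  have hrhs : μ.real t / μ.real s * ⨍ x in t, |f x - c| ∂μ =
      (μ.real s)⁻¹ * ∫ x in t, |f x - c| ∂μ := by
    rw [setAverage_eq, smul_eq_mul]
    field_simp
  rw [hdiff, hrhs, abs_mul, abs_inv, abs_of_pos hspos]
  gcongr
  calc |∫ x in s, (f x - c) ∂μ| ≤ ∫ x in s, |f x - c| ∂μ := abs_integral_le_integral_abs
    _ ≤ ∫ x in t, |f x - c| ∂μ :=
      setIntegral_mono_set (hf.sub (integrableOn_const ht)).abs
        (Eventually.of_forall fun _ => abs_nonneg _) hst.eventuallyLE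

theorem MO_nonneg (φ : Cn n → EReal) (z : Cn n) (r : ℝ) : 0 ≤ MO φ z r := by
  rw [MO, setAverage_eq, smul_eq_mul]
  exact mul_nonneg (by positivity) (integral_nonneg fun _ => abs_nonneg _)

theorem abs_ballAvg_sub_ballAvg_le {φ : Cn n → EReal} {a : Cn n} {ρ ρ' : ℝ} (hρ : 0 < ρ)
    (hρρ' : ρ ≤ ρ') (hint : IntegrableOn (fun x => (φ x).toReal) (ball a ρ')) :
    |ballAvg φ a ρ - ballAvg φ a ρ'| ≤ (ρ' / ρ) ^ Module.finrank ℝ (Cn n) * MO φ a ρ' := by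
  have hunit : 0 < volume.real (ball (0 : Cn n) 1) :=
    ENNReal.toReal_pos (measure_ball_pos volume _ one_pos).ne' measure_ball_lt_top.ne
  have hratio : volume.real (ball a ρ') / volume.real (ball a ρ) =
      (ρ' / ρ) ^ Module.finrank ℝ (Cn n) := by
    simp only [measureReal_def, Measure.addHaar_ball_of_pos volume a hρ,
      Measure.addHaar_ball_of_pos volume a (hρ.trans_le hρρ'), ENNReal.toReal_mul,
      ENNReal.toReal_ofReal (pow_nonneg (hρ.trans_le hρρ').le _),
      ENNReal.toReal_ofReal (pow_nonneg hρ.le _), div_pow]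
    rw [measureReal_def] at hunit
    field_simp
  rw [← hratio]
  exact abs_setAverage_sub_setAverage_le (ball_subset_ball hρρ')
    (measure_ball_pos volume a hρ).ne' measure_ball_lt_top.ne hint

theorem abs_sub_le_of_forall_le_two_mul {g : ℝ → ℝ} {C ρ₀ : ℝ}
    (hstep : ∀ ρ ρ', 0 < ρ → ρ ≤ ρ' → ρ' ≤ 2 * ρ → ρ' ≤ ρ₀ → |g ρ - g ρ'| ≤ C)
    {ρ : ℝ} (hρ : 0 < ρ) (hρ₀ : ρ ≤ ρ₀) :
    |g ρ - g ρ₀| ≤ C * (Real.logb 2 (ρ₀ / ρ) + 1) := by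
  have hC : 0 ≤ C :=
    (abs_nonneg _).trans (hstep ρ₀ ρ₀ (hρ.trans_le hρ₀) le_rfl (by linarith) le_rfl)
  have hsteps : ∀ k : ℕ, ∀ ρ, 0 < ρ → ρ ≤ ρ₀ → ρ₀ ≤ 2 ^ k * ρ → |g ρ - g ρ₀| ≤ C * k := by
    intro k
    induction k with
    | zero =>
      intro ρ _ hρ₀ hk
      rw [pow_zero, one_mul] at hk
      simp [le_antisymm hρ₀ hk]
    | succ k ih =>
      intro ρ hρ hρ₀ hk
      push_cast
      rcases le_or_gt ρ₀ (2 * ρ) with h2 | h2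
      · nlinarith [hstep ρ ρ₀ hρ hρ₀ h2 le_rfl, (k.cast_nonneg : (0 : ℝ) ≤ k)]
      · have hk' : ρ₀ ≤ 2 ^ k * (2 * ρ) := by rw [pow_succ] at hk; linarith
        calc |g ρ - g ρ₀| ≤ |g ρ - g (2 * ρ)| + |g (2 * ρ) - g ρ₀| := abs_sub_le _ _ _
          _ ≤ C + C * k :=
            add_le_add (hstep ρ (2 * ρ) hρ (by linarith) le_rfl h2.le)
              (ih (2 * ρ) (by positivity) h2.le hk')
          _ = C * (k + 1) := by ring
  have hlogb : 0 ≤ Real.logb 2 (ρ₀ / ρ) :=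
    Real.logb_nonneg one_lt_two ((one_le_div hρ).2 hρ₀)
  set k := ⌈Real.logb 2 (ρ₀ / ρ)⌉₊
  have hk : ρ₀ ≤ 2 ^ k * ρ := by
    rw [← div_le_iff₀ hρ]
    calc ρ₀ / ρ = 2 ^ Real.logb 2 (ρ₀ / ρ) :=
          (Real.rpow_logb two_pos (by norm_num) (div_pos (hρ.trans_le hρ₀) hρ)).symm
      _ ≤ 2 ^ (k : ℝ) := Real.rpow_le_rpow_of_exponent_le one_le_two (Nat.le_ceil _)
      _ = 2 ^ k := Real.rpow_natCast 2 k
  calc |g ρ - g ρ₀| ≤ C * k := hsteps k ρ hρ hρ₀ hk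
    _ ≤ C * (Real.logb 2 (ρ₀ / ρ) + 1) :=
      mul_le_mul_of_nonneg_left (Nat.ceil_lt_add_one hlogb).le hC

theorem abs_ballAvg_sub_ballAvg_le_of_MO_le {φ : Cn n → EReal} {a : Cn n} {ρ₀ η : ℝ}
    (hint : ∀ ρ, 0 < ρ → ρ ≤ ρ₀ → IntegrableOn (fun x => (φ x).toReal) (ball a ρ))
    (hMO : ∀ ρ, 0 < ρ → ρ ≤ ρ₀ → MO φ a ρ ≤ η) {ρ : ℝ} (hρ : 0 < ρ) (hρ₀ : ρ ≤ ρ₀) :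
    |ballAvg φ a ρ - ballAvg φ a ρ₀| ≤
      2 ^ Module.finrank ℝ (Cn n) * η * (Real.logb 2 (ρ₀ / ρ) + 1) := by
  refine abs_sub_le_of_forall_le_two_mul (fun ρ ρ' hρ hρρ' hρ'2 hρ'₀ => ?_) hρ hρ₀
  have hρ' : 0 < ρ' := hρ.trans_le hρρ'
  have hratio : ρ' / ρ ≤ 2 := by rw [div_le_iff₀ hρ]; linarith
  exact (abs_ballAvg_sub_ballAvg_le hρ hρρ' (hint ρ' hρ' hρ'₀)).trans
    (mul_le_mul (pow_le_pow_left₀ (by positivity) hratio _) (hMO ρ' hρ' hρ'₀)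
      (MO_nonneg φ a ρ') (by positivity))

def ballSup (φ : Cn n → EReal) (a : Cn n) (r : ℝ) : EReal := ⨆ z ∈ ball a r, φ z

section ballSup

variable {φ : Cn n → EReal} {a : Cn n}

theorem le_ballSup {r : ℝ} {x : Cn n} (hx : x ∈ ball a r) : φ x ≤ ballSup φ a r :=
  le_iSup₂ (f := fun z _ => φ z) x hx

theorem ballSup_mono {r r' : ℝ} (h : r ≤ r') : ballSup φ a r ≤ ballSup φ a r' :=
  iSup₂_le fun _ hz => le_ballSup (ball_subset_ball h hz)

theorem exists_ne_bot_of_ballSup_ne_bot {r : ℝ} (h : ballSup φ a r ≠ ⊥) :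
    ∃ z ∈ ball a r, φ z ≠ ⊥ := by
  by_contra! hbot
  exact h (iSup₂_eq_bot.2 hbot)

theorem ballSup_of_subsingleton [Subsingleton (Cn n)] {r : ℝ} (hr : 0 < r) :
    ballSup φ a r = φ a := by
  rw [ballSup, Set.subsingleton_of_subsingleton.eq_singleton_of_mem (mem_ball_self hr),
    iSup_singleton]

theorem ballAvg_le_toReal_ballSup {r : ℝ} (hr : 0 < r)
    (hint : IntegrableOn (fun x => (φ x).toReal) (ball a r))
    (hae : ∀ᵐ x ∂volume.restrict (ball a r), φ x ≠ ⊥) (htop : ballSup φ a r ≠ ⊤) :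
    ballAvg φ a r ≤ (ballSup φ a r).toReal := by
  have : IsFiniteMeasure (volume.restrict (ball a r)) := isFiniteMeasure_restrict.2
    measure_ball_lt_top.ne
  have hgood : ∀ᵐ x ∂volume.restrict (ball a r), x ∈ ball a r ∧ φ x ≠ ⊥ :=
    (ae_restrict_mem measurableSet_ball).and hae
  obtain ⟨x, hx, hle⟩ := exists_notMem_null_average_le
    (by simpa [Measure.restrict_eq_zero] using (measure_ball_pos volume a hr).ne') hint
    (ae_iff.1 hgood)
  have hx' : x ∈ ball a r ∧ φ x ≠ ⊥ := not_not.1 hx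
  exact hle.trans (EReal.toReal_le_toReal (le_ballSup hx'.1) hx'.2 htop)

end ballSup

theorem IsPSHOn.integrableOn_ball_of_ballSup_ne_bot {U : Set (Cn n)} {φ : Cn n → EReal}
    (hφ : IsPSHOn φ U) (hU : IsOpen U) {a : Cn n} {ρ M : ℝ} (hρ : 0 < ρ)
    (hball : ball a (3 * ρ) ⊆ U) (hM : ∀ x ∈ ball a (3 * ρ), φ x ≤ M)
    (hbot : ballSup φ a ρ ≠ ⊥) :
    IntegrableOn (fun x => (φ x).toReal) (ball a ρ) ∧
      ∀ᵐ x ∂volume.restrict (ball a ρ), φ x ≠ ⊥ := by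
  obtain ⟨z, hz, hzbot⟩ := exists_ne_bot_of_ballSup_ne_bot hbot
  rw [mem_ball] at hz
  have hinner : ball a ρ ⊆ ball z (2 * ρ) := fun x hx => by
    rw [mem_ball] at hx ⊢
    linarith [dist_triangle x a z, dist_comm a z]
  have houter : ball z (2 * ρ) ⊆ ball a (3 * ρ) := fun x hx => by
    rw [mem_ball] at hx ⊢
    linarith [dist_triangle x z a]
  obtain ⟨hint, hae⟩ := hφ.integrableOn_ball hU (by positivity) (houter.trans hball)
    (fun x hx => hM x (houter hx)) hzbot
  exact ⟨hint.mono_set hinner, ae_mono (Measure.restrict_mono hinner le_rfl) hae⟩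

theorem IsPSHOn.exists_log_lower_bound {Ω : Set (Cn n)} {φ : Cn n → EReal}
    (hφ : IsPSHOn φ Ω) (hΩ : IsOpen Ω) {a : Cn n} (ha : a ∈ Ω)
    (hMO : Tendsto (MO φ a) (𝓝[>] 0) (𝓝 0)) (hbot : ∀ r > 0, ballSup φ a r ≠ ⊥)
    {r₁ : ℝ} (hr₁ : 0 < r₁) (htop : ballSup φ a r₁ ≠ ⊤) {ε : ℝ} (hε : 0 < ε) :
    ∃ A : ℝ, ∀ᶠ r in 𝓝[>] 0, A + ε * Real.log r ≤ (ballSup φ a r).toReal := by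
  set η := ε * Real.log 2 / 2 ^ Module.finrank ℝ (Cn n) with hη_def
  have hη : 0 < η := div_pos (mul_pos hε (Real.log_pos one_lt_two)) (by positivity)
  obtain ⟨δ, hδ, hδMO⟩ := (nhdsGT_basis (0 : ℝ)).eventually_iff.1
    (hMO.eventually (gt_mem_nhds hη))
  obtain ⟨R, hR, hRΩ⟩ := Metric.isOpen_iff.1 hΩ a ha
  set ρ₀ := min (δ / 2) (min R r₁ / 3)
  have hρ₀ : 0 < ρ₀ := lt_min (half_pos hδ) (div_pos (lt_min hR hr₁) three_pos)
  have hρ₀δ : ρ₀ ≤ δ / 2 := min_le_left _ _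
  have hρ₀R : 3 * ρ₀ ≤ min R r₁ := by linarith [min_le_right (δ / 2) (min R r₁ / 3)]
  have hM : ∀ x ∈ ball a (min R r₁), φ x ≤ (ballSup φ a r₁).toReal := fun x hx =>
    (le_ballSup (ball_subset_ball (min_le_right _ _) hx)).trans_eq
      (EReal.coe_toReal htop (hbot r₁ hr₁)).symm
  have hreg : ∀ ρ, 0 < ρ → ρ ≤ ρ₀ → IntegrableOn (fun x => (φ x).toReal) (ball a ρ) ∧
      ∀ᵐ x ∂volume.restrict (ball a ρ), φ x ≠ ⊥ := fun ρ hρ hρρ₀ => by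
    have h3ρ : ball a (3 * ρ) ⊆ ball a (min R r₁) := ball_subset_ball (by linarith)
    exact hφ.integrableOn_ball_of_ballSup_ne_bot hΩ hρ
      (h3ρ.trans ((ball_subset_ball (min_le_left _ _)).trans hRΩ))
      (fun x hx => hM x (h3ρ hx)) (hbot ρ hρ)
  have hosc : ∀ ρ, 0 < ρ → ρ ≤ ρ₀ → MO φ a ρ ≤ η := fun ρ hρ hρρ₀ =>
    (hδMO ⟨hρ, by linarith⟩).le
  refine ⟨ballAvg φ a ρ₀ - ε * Real.log ρ₀ - 2 ^ Module.finrank ℝ (Cn n) * η, ?_⟩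
  filter_upwards [Ioo_mem_nhdsGT hρ₀] with r hr
  have hdrift := abs_le.1 (abs_ballAvg_sub_ballAvg_le_of_MO_le
    (fun ρ hρ hρρ₀ => (hreg ρ hρ hρρ₀).1) hosc hr.1 hr.2.le)
  have havg := ballAvg_le_toReal_ballSup hr.1 (hreg r hr.1 hr.2.le).1 (hreg r hr.1 hr.2.le).2
    (ne_top_of_le_ne_top htop (ballSup_mono (by linarith [hr.2, min_le_right R r₁])))
  have hlogb : 2 ^ Module.finrank ℝ (Cn n) * η * (Real.logb 2 (ρ₀ / r) + 1) =
      ε * (Real.log ρ₀ - Real.log r) + 2 ^ Module.finrank ℝ (Cn n) * η := by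
    rw [Real.logb, Real.log_div hρ₀.ne' hr.1.ne', hη_def]
    field_simp
  linarith [hdrift.1]

theorem IsVMOOn.tendsto_MO [Nontrivial (Cn n)] {Ω : Set (Cn n)} {φ : Cn n → EReal}
    (hVMO : IsVMOOn φ Ω) (hΩ : IsOpen Ω) (hbdd : Bornology.IsBounded Ω) {a : Cn n}
    (ha : a ∈ Ω) : Tendsto (MO φ a) (𝓝[>] 0) (𝓝 0) := by
  have hfront : (frontier Ω).Nonempty :=
    nonempty_frontier_iff.2 ⟨⟨a, ha⟩, fun h => NormedSpace.unbounded_univ ℝ (Cn n) (h ▸ hbdd)⟩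
  have hdist : 0 < 1 / 2 * infDist a (frontier Ω) :=
    mul_pos one_half_pos ((isClosed_frontier.notMem_iff_infDist_pos hfront).1
      fun h => (hΩ.frontier_eq ▸ h : a ∈ closure Ω \ Ω).2 ha)
  refine tendsto_order.2 ⟨fun ε hε => Eventually.of_forall fun r => hε.trans_le (MO_nonneg φ a r),
    fun ε hε => ?_⟩
  obtain ⟨δ, hδ, hδMO⟩ := hVMO.2 ε hε
  filter_upwards [Ioo_mem_nhdsGT (lt_min hδ hdist)] with r hr
  exact hδMO a ha r hr.1 hr.2.le

theorem tendsto_div_log_nhdsGT_zero {f : ℝ → ℝ}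
    (h : ∀ ε > 0, ∃ A M : ℝ, ∀ᶠ r in 𝓝[>] 0, A + ε * Real.log r ≤ f r ∧ f r ≤ M) :
    Tendsto (fun r => f r / Real.log r) (𝓝[>] 0) (𝓝 0) := by
  have hlog := Real.tendsto_log_nhdsGT_zero
  refine tendsto_order.2 ⟨fun ε hε => ?_, fun ε hε => ?_⟩
  · obtain ⟨A, M, hAM⟩ := h 1 one_pos
    filter_upwards [hAM, hlog.eventually (eventually_lt_atBot 0),
      (hlog.const_div_atBot M).eventually (lt_mem_nhds hε)] with r hr hr0 hM
    exact hM.trans_le (div_le_div_of_nonpos_of_le hr0.le hr.2)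
  · obtain ⟨A, M, hAM⟩ := h (ε / 2) (half_pos hε)
    filter_upwards [hAM, hlog.eventually (eventually_lt_atBot 0),
      (hlog.const_div_atBot A).eventually (gt_mem_nhds (half_pos hε))] with r hr hr0 hA
    calc f r / Real.log r ≤ (A + ε / 2 * Real.log r) / Real.log r :=
          div_le_div_of_nonpos_of_le hr0.le hr.1
      _ = A / Real.log r + ε / 2 := by rw [add_div, mul_div_assoc, div_self hr0.ne, mul_one]
      _ < ε := by linarith

theorem IsPSHOn.tendsto_ballSup_div_log {Ω : Set (Cn n)} {φ : Cn n → EReal}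
    (hφ : IsPSHOn φ Ω) (hΩ : IsOpen Ω) {a : Cn n} (ha : a ∈ Ω)
    (hMO : Tendsto (MO φ a) (𝓝[>] 0) (𝓝 0)) (hbot : ∀ r > 0, ballSup φ a r ≠ ⊥)
    {r₁ : ℝ} (hr₁ : 0 < r₁) (htop : ballSup φ a r₁ ≠ ⊤) :
    Tendsto (fun r => (ballSup φ a r).toReal / Real.log r) (𝓝[>] 0) (𝓝 0) := by
  refine tendsto_div_log_nhdsGT_zero fun ε hε => ?_
  obtain ⟨A, hA⟩ := hφ.exists_log_lower_bound hΩ ha hMO hbot hr₁ htop hε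
  refine ⟨A, (ballSup φ a r₁).toReal, ?_⟩
  filter_upwards [hA, Ioo_mem_nhdsGT hr₁] with r hAr hr
  exact ⟨hAr, EReal.toReal_le_toReal (ballSup_mono hr.2.le) (hbot r hr.1) htop⟩

/-- `EReal.toReal` sends `⊥` and `⊤` to `0`, so in these cases the quotient is eventually `0`. -/
theorem tendsto_ballSup_div_log_of_bot_or_top {φ : Cn n → EReal} {a : Cn n}
    (h : (∃ r > 0, ballSup φ a r = ⊥) ∨ ∀ r > 0, ballSup φ a r = ⊤) :
    Tendsto (fun r => (ballSup φ a r).toReal / Real.log r) (𝓝[>] 0) (𝓝 0) := by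
  refine (Real.tendsto_log_nhdsGT_zero.const_div_atBot 0).congr' ?_
  rcases h with ⟨r₀, hr₀, hbot⟩ | htop
  · filter_upwards [Ioo_mem_nhdsGT hr₀] with r hr
    rw [le_bot_iff.1 ((ballSup_mono hr.2.le).trans hbot.le), EReal.toReal_bot]
  · filter_upwards [self_mem_nhdsWithin] with r hr
    rw [htop r hr, EReal.toReal_top]

theorem lelong_eq_zero_of_isVMOOn_general (n : ℕ) (Ω : Set (Cn n)) (φ : Cn n → EReal)
    (hΩopen : IsOpen Ω) (hΩbdd : Bornology.IsBounded Ω)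
    (hφ : IsPSHOn φ Ω) (hVMO : IsVMOOn φ Ω) :
    ∀ a ∈ Ω, lelong φ a = 0 := by
  intro a ha
  refine Tendsto.limUnder_eq (g := fun r => (ballSup φ a r).toReal / Real.log r) ?_
  rcases subsingleton_or_nontrivial (Cn n) with _ | _
  · refine (Real.tendsto_log_nhdsGT_zero.const_div_atBot (φ a).toReal).congr' ?_
    filter_upwards [self_mem_nhdsWithin] with r hr
    rw [ballSup_of_subsingleton hr]
  by_cases hdeg : (∃ r > 0, ballSup φ a r = ⊥) ∨ ∀ r > 0, ballSup φ a r = ⊤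
  · exact tendsto_ballSup_div_log_of_bot_or_top hdeg
  push Not at hdeg
  obtain ⟨hbot, r₁, hr₁, htop⟩ := hdeg
  exact hφ.tendsto_ballSup_div_log hΩopen ha (hVMO.tendsto_MO hΩopen hΩbdd ha) hbot hr₁ htop

/-- **Proposition.** Let `Ω ⊆ ℂⁿ` be a bounded domain and `φ` plurisubharmonic on `Ω`.
If `φ ∈ VMO(Ω)`, then the Lelong number `ν_φ(a)` vanishes at every `a ∈ Ω`. -/
theorem lelong_eq_zero_of_isVMOOn (n : ℕ) (Ω : Set (Cn n)) (φ : Cn n → EReal)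
    (hΩopen : IsOpen Ω) (hΩconn : IsConnected Ω) (hΩbdd : Bornology.IsBounded Ω)
    (hφ : IsPSHOn φ Ω) (hVMO : IsVMOOn φ Ω) :
    ∀ a ∈ Ω, lelong φ a = 0 :=
  lelong_eq_zero_of_isVMOOn_general n Ω φ hΩopen hΩbdd hφ hVMO
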